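/- For every integer r ≥ 0, every real λ > −1 and every v ∈ ℝ, one has v^{2r+1}/(2^{2r+1}(λ+1)_{2r+1}) · j_{λ+2r+1}(v) = (−1)^{r+1} Σ_{s=0}^{r} (−1)^{s} · binom(r,s) · ((λ+r+1)_s/(λ+1)_s) · j'_{λ+s}(v), where j'_{λ+s} denotes the derivative of j_{λ+s} with respect to v. -/

import Mathlib

open Real MeasureTheory Finset

/-- Normalized Bessel function j_lambda(v). -/
noncomputable def nbessel (l v : ℝ) : ℝ :=
  Real.Gamma (l + 1) *
    ∑' k : ℕ, (-1 : ℝ) ^ k / (Nat.factorial k * Real.Gamma (k + l + 1)) * (v / 2) ^ (2 * k)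

/-- Pochhammer symbol (z)_n = z(z+1)...(z+n-1), with (z)_0 = 1. -/
noncomputable def poch (z : ℝ) (n : ℕ) : ℝ := ∏ i ∈ Finset.range n, (z + i)

lemma poch_zero (z : ℝ) : poch z 0 = 1 := by simp [poch]

lemma poch_succ (z : ℝ) (n : ℕ) : poch z (n + 1) = poch z n * (z + n) := by
  simp [poch, Finset.prod_range_succ]

lemma poch_succ' (z : ℝ) (n : ℕ) : poch z (n + 1) = z * poch (z + 1) n := by
  rw [poch, Finset.prod_range_succ', poch]
  simp only [Nat.cast_add, Nat.cast_one, Nat.cast_zero, add_zero]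
  rw [mul_comm]
  congr 1
  exact Finset.prod_congr rfl fun i _ => by ring

lemma poch_pos {z : ℝ} (h : 0 < z) (n : ℕ) : 0 < poch z n := by
  apply Finset.prod_pos
  intro i _
  positivity

lemma Gamma_poch {z : ℝ} (h : 0 < z) (n : ℕ) :
    Real.Gamma (z + n) = Real.Gamma z * poch z n := by
  induction n with
  | zero => simp [poch_zero]
  | succ n ih =>
    have hz : z + n ≠ 0 := by positivity
    have h1 : z + (↑(n + 1) : ℝ) = (z + n) + 1 := by push_cast; ring
    rw [h1, Real.Gamma_add_one hz, ih, poch_succ]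
    ring

lemma poch_nat_cast (k r : ℕ) :
    poch ((k : ℝ) + 1) r * (k.factorial : ℝ) = ((k + r).factorial : ℝ) := by
  induction r with
  | zero => simp [poch_zero]
  | succ r ih =>
    rw [poch_succ]
    have h2 : k + (r + 1) = (k + r) + 1 := by ring
    rw [h2, Nat.factorial_succ]
    push_cast
    nlinarith [ih]

lemma poch_eq_zero {m r : ℕ} (h : m < r) : poch ((m : ℝ) + 1 - r) r = 0 := by
  apply Finset.prod_eq_zero (i := r - 1 - m)
  · simp only [Finset.mem_range]; omega
  · have h1 : (↑(r - 1 - m) : ℝ) = (r : ℝ) - 1 - m := by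
      have : r - 1 - m + m + 1 = r := by omega
      have := congrArg (Nat.cast : ℕ → ℝ) this
      push_cast at this
      linarith
    rw [h1]; ring

lemma CV (r : ℕ) : ∀ A C : ℝ, 0 < C →
    ∑ s ∈ Finset.range (r + 1), (-1 : ℝ) ^ s * (r.choose s : ℝ) * (poch A s / poch C s)
      = poch (C - A) r / poch C r := by
  induction r with
  | zero => intro A C hC; simp [poch_zero]
  | succ r ih =>
    intro A C hC
    have hC1 : (0 : ℝ) < C + 1 := by linarith
    set g : ℕ → ℝ := fun s => (-1 : ℝ) ^ s * (r.choose s : ℝ) * (poch A s / poch C s) with hg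
    have key : ∑ s ∈ Finset.range (r + 2), (-1 : ℝ) ^ s * ((r + 1).choose s : ℝ) * (poch A s / poch C s)
        = (∑ s ∈ Finset.range (r + 1), g s)
          - (A / C) * ∑ s ∈ Finset.range (r + 1),
              (-1 : ℝ) ^ s * (r.choose s : ℝ) * (poch (A + 1) s / poch (C + 1) s) := by
      rw [Finset.sum_range_succ'
        (fun s => (-1 : ℝ) ^ s * ((r + 1).choose s : ℝ) * (poch A s / poch C s)) (r + 1)]
      have hsplit : ∀ i ∈ Finset.range (r + 1),
          (fun s => (-1 : ℝ) ^ s * ((r + 1).choose s : ℝ) * (poch A s / poch C s)) (i + 1)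
            = g (i + 1) + (-(A / C)) * ((-1 : ℝ) ^ i * (r.choose i : ℝ)
                * (poch (A + 1) i / poch (C + 1) i)) := by
        intro i _
        have hq : poch A (i + 1) / poch C (i + 1)
            = (A / C) * (poch (A + 1) i / poch (C + 1) i) := by
          rw [poch_succ', poch_succ']
          have h1 : poch (C + 1) i ≠ 0 := (poch_pos hC1 i).ne'
          have h2 : C ≠ 0 := hC.ne'
          field_simp
        simp only [hg]
        rw [Nat.choose_succ_succ']
        push_cast
        rw [hq]
        ring
      rw [Finset.sum_congr rfl hsplit, Finset.sum_add_distrib]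
      have hre : ∑ i ∈ Finset.range (r + 1), g (i + 1)
          + (-1 : ℝ) ^ (0:ℕ) * (((r + 1).choose 0 : ℕ) : ℝ) * (poch A 0 / poch C 0)
          = ∑ s ∈ Finset.range (r + 2), g s := by
        rw [Finset.sum_range_succ' g (r + 1)]
        congr 1
        simp [hg, poch_zero]
      have htop : ∑ s ∈ Finset.range (r + 2), g s = ∑ s ∈ Finset.range (r + 1), g s := by
        rw [Finset.sum_range_succ]
        simp [hg, Nat.choose_succ_self]
      have h3 : ∑ x ∈ Finset.range (r + 1), (-(A / C)) * ((-1 : ℝ) ^ x * (r.choose x : ℝ)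
            * (poch (A + 1) x / poch (C + 1) x))
          = -(A / C) * ∑ s ∈ Finset.range (r + 1), (-1 : ℝ) ^ s * (r.choose s : ℝ)
            * (poch (A + 1) s / poch (C + 1) s) := by
        rw [Finset.mul_sum]
      rw [h3]
      linarith [hre, htop]
    rw [key, ih A C hC, ih (A + 1) (C + 1) hC1]
    have e1 : C + 1 - (A + 1) = C - A := by ring
    rw [e1]
    have hP : poch C r ≠ 0 := (poch_pos hC r).ne'
    have hQ : poch (C + 1) r ≠ 0 := (poch_pos hC1 r).ne'
    have hrel : C * poch (C + 1) r = poch C r * (C + r) := by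
      rw [← poch_succ', ← poch_succ]
    have hCr : (0 : ℝ) < C + r := by positivity
    have hQe : poch (C + 1) r = poch C r * (C + r) / C := by
      field_simp
      linarith [hrel]
    rw [poch_succ (C - A) r, poch_succ C r, hQe]
    field_simp
    ring

noncomputable def bc (μ : ℝ) (k : ℕ) : ℝ :=
  (-1 : ℝ) ^ k / (Nat.factorial k * Real.Gamma (k + μ + 1))

lemma nbessel_eq (μ v : ℝ) :
    nbessel μ v = Real.Gamma (μ + 1) * ∑' k : ℕ, bc μ k * (v / 2) ^ (2 * k) := rfl

lemma Gamma_arg_pos {μ : ℝ} (hμ : -1 < μ) (k : ℕ) : (0 : ℝ) < (k : ℝ) + μ + 1 := by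
  have : (0 : ℝ) ≤ (k : ℝ) := Nat.cast_nonneg k
  linarith

lemma abs_bc {μ : ℝ} (hμ : -1 < μ) (k : ℕ) :
    |bc μ k| = 1 / (Nat.factorial k * Real.Gamma ((k : ℝ) + μ + 1)) := by
  have h1 : (0 : ℝ) < Real.Gamma ((k : ℝ) + μ + 1) := Real.Gamma_pos_of_pos (Gamma_arg_pos hμ k)
  have h2 : (0 : ℝ) < (Nat.factorial k : ℝ) := by positivity
  rw [bc, abs_div, abs_pow, abs_neg, abs_one, one_pow, abs_of_pos (by positivity)]

lemma Gamma_lower {μ : ℝ} (hμ : -1 < μ) (k : ℕ) :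
    Real.Gamma (μ + 1) * (min (μ + 1) 1) ^ k ≤ Real.Gamma ((k : ℝ) + μ + 1) := by
  have hμ1 : (0 : ℝ) < μ + 1 := by linarith
  have harg : ((k : ℝ) + μ + 1) = (μ + 1) + k := by ring
  rw [harg, Gamma_poch hμ1 k]
  have hpoch : (min (μ + 1) 1) ^ k ≤ poch (μ + 1) k := by
    have h1 : (min (μ + 1) 1) ^ k = ∏ _i ∈ Finset.range k, min (μ + 1) 1 := by
      rw [Finset.prod_const, Finset.card_range]
    rw [poch, h1]
    apply Finset.prod_le_prod
    · intro i _; positivity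
    · intro i _
      have : (0 : ℝ) ≤ (i : ℝ) := Nat.cast_nonneg i
      have := min_le_left (μ + 1) 1
      linarith
  have hG : (0 : ℝ) < Real.Gamma (μ + 1) := Real.Gamma_pos_of_pos hμ1
  nlinarith [hpoch, hG]

lemma summable_bound {μ : ℝ} (hμ : -1 < μ) {x : ℝ} (hx : 0 ≤ x) :
    Summable (fun k : ℕ => |bc μ k| * x ^ k * (k + 1)) := by
  set ε : ℝ := min (μ + 1) 1 with hε
  have hε0 : 0 < ε := lt_min (by linarith) one_pos
  have hG : (0 : ℝ) < Real.Gamma (μ + 1) := Real.Gamma_pos_of_pos (by linarith)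
  apply Summable.of_nonneg_of_le (f := fun k => (1 / Real.Gamma (μ + 1)) * ((2 * x / ε) ^ k / (Nat.factorial k)))
  · intro k; positivity
  · intro k
    have h1 : (0 : ℝ) < Real.Gamma ((k : ℝ) + μ + 1) := Real.Gamma_pos_of_pos (Gamma_arg_pos hμ k)
    have h2 : (0 : ℝ) < (Nat.factorial k : ℝ) := by positivity
    have hk2 : ((k : ℝ) + 1) ≤ 2 ^ k := by
      have h := Nat.lt_pow_self (n := k) (by norm_num : 1 < 2)
      have h2 : (k + 1 : ℕ) ≤ 2 ^ k := h
      calc ((k : ℝ) + 1) = ((k + 1 : ℕ) : ℝ) := by push_cast; ring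
        _ ≤ ((2 ^ k : ℕ) : ℝ) := by exact_mod_cast h2
        _ = 2 ^ k := by push_cast; ring
    have hlow := Gamma_lower hμ k
    have hbc : |bc μ k| ≤ 1 / (Nat.factorial k * (Real.Gamma (μ + 1) * ε ^ k)) := by
      rw [abs_bc hμ k]
      apply one_div_le_one_div_of_le (by positivity)
      have : (0:ℝ) < ε ^ k := by positivity
      nlinarith [hlow, h2]
    calc |bc μ k| * x ^ k * (k + 1)
        ≤ (1 / (Nat.factorial k * (Real.Gamma (μ + 1) * ε ^ k))) * x ^ k * 2 ^ k := by
          gcongr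
      _ = (1 / Real.Gamma (μ + 1)) * ((2 * x / ε) ^ k / (Nat.factorial k)) := by
          rw [div_pow, mul_pow]
          field_simp
  · exact (Real.summable_pow_div_factorial (2 * x / ε)).mul_left _

lemma summable_series {μ : ℝ} (hμ : -1 < μ) (y : ℝ) :
    Summable (fun k : ℕ => bc μ k * y ^ (2 * k)) := by
  apply Summable.of_abs
  apply Summable.of_nonneg_of_le (f := fun k => |bc μ k| * (y ^ 2) ^ k * (k + 1))
  · intro k; positivity
  · intro k
    rw [abs_mul, abs_pow, pow_mul, sq_abs]
    apply le_mul_of_one_le_right (by positivity)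
    have : (0 : ℝ) ≤ (k : ℝ) := Nat.cast_nonneg k
    linarith
  · exact summable_bound hμ (sq_nonneg y)

lemma hasDerivAt_nbessel (μ : ℝ) (hμ : -1 < μ) (v : ℝ) :
    HasDerivAt (nbessel μ) (-(v / (2 * (μ + 1))) * nbessel (μ + 1) v) v := by
  set R : ℝ := |v| + 1 with hR
  set M : ℝ := max 1 (R / 2) with hM
  have hM1 : (1 : ℝ) ≤ M := le_max_left _ _
  have hM0 : (0 : ℝ) < M := by linarith
  set u : ℕ → ℝ := fun k => |bc μ k| * (M ^ 2) ^ k * (k + 1) with hu_def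
  have hu : Summable u := summable_bound hμ (by positivity)
  set g : ℕ → ℝ → ℝ := fun k y => bc μ k * (y / 2) ^ (2 * k) with hg_def
  set g' : ℕ → ℝ → ℝ := fun k y => bc μ k * k * (y / 2) ^ (2 * k - 1) with hg'_def
  have hball : v ∈ Metric.ball (0 : ℝ) R := by
    simp [Real.dist_eq, hR]
  have hg : ∀ k y, y ∈ Metric.ball (0 : ℝ) R → HasDerivAt (g k) (g' k y) y := by
    intro k y _
    have h1 : HasDerivAt (fun y : ℝ => y / 2) (1 / 2) y := (hasDerivAt_id y).div_const 2
    have h2 := (h1.fun_pow (2 * k)).const_mul (bc μ k)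
    refine h2.congr_deriv ?_
    simp only [hg'_def]
    push_cast
    ring
  have hbound : ∀ k y, y ∈ Metric.ball (0 : ℝ) R → ‖g' k y‖ ≤ u k := by
    intro k y hy
    simp only [Real.norm_eq_abs, hg'_def, hu_def]
    rw [abs_mul, abs_mul, abs_pow]
    have hy2 : |y / 2| ≤ M := by
      rw [Metric.mem_ball, Real.dist_eq, sub_zero] at hy
      rw [abs_div]
      have : |(2 : ℝ)| = 2 := by norm_num
      rw [this]
      calc |y| / 2 ≤ R / 2 := by linarith
        _ ≤ M := le_max_right _ _
    cases k with
    | zero => simp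
    | succ j =>
      have e1 : |y / 2| ^ (2 * (j + 1) - 1) ≤ M ^ (2 * (j + 1) - 1) := by
        apply pow_le_pow_left₀ (abs_nonneg _) hy2
      have e2 : M ^ (2 * (j + 1) - 1) ≤ (M ^ 2) ^ (j + 1) := by
        rw [← pow_mul]
        apply pow_le_pow_right₀ hM1
        omega
      have e3 : |((j : ℝ) + 1)| = (j : ℝ) + 1 := abs_of_nonneg (by positivity)
      push_cast
      rw [e3]
      have hb := abs_nonneg (bc μ (j + 1))
      have h4 : ((j : ℝ) + 1) ≤ ((j : ℝ) + 1 + 1) := by linarith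
      calc |bc μ (j + 1)| * ((j : ℝ) + 1) * |y / 2| ^ (2 * (j + 1) - 1)
          ≤ |bc μ (j + 1)| * ((j : ℝ) + 1 + 1) * (M ^ 2) ^ (j + 1) := by
            apply mul_le_mul
            · apply mul_le_mul_of_nonneg_left h4 hb
            · exact le_trans e1 e2
            · positivity
            · positivity
        _ = |bc μ (j + 1)| * (M ^ 2) ^ (j + 1) * ((j : ℝ) + 1 + 1) := by ring
  have hg0 : Summable fun k => g k v := summable_series hμ (v / 2)
  have hd : HasDerivAt (fun y => ∑' k, g k y) (∑' k, g' k v) v :=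
    hasDerivAt_tsum_of_isPreconnected hu Metric.isOpen_ball
      (convex_ball (0 : ℝ) R).isPreconnected hg hbound hball hg0 hball
  have hsum' : Summable fun k => g' k v :=
    Summable.of_norm_bounded hu fun k => hbound k v hball
  have hshift : (∑' k, g' k v)
      = -(v / 2) * ∑' k : ℕ, bc (μ + 1) k * (v / 2) ^ (2 * k) := by
    rw [Summable.tsum_eq_zero_add hsum']
    have hzero : g' 0 v = 0 := by simp [hg'_def]
    rw [hzero, zero_add]
    rw [← tsum_mul_left]
    apply tsum_congr
    intro k
    simp only [hg'_def]
    have harg : ((k + 1 : ℕ) : ℝ) + μ + 1 = (k : ℝ) + (μ + 1) + 1 := by push_cast; ring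
    rw [bc, bc, harg]
    have he : 2 * (k + 1) - 1 = 2 * k + 1 := by omega
    rw [he, pow_succ]
    have hfac : ((k + 1).factorial : ℝ) = ((k : ℝ) + 1) * (k.factorial : ℝ) := by
      rw [Nat.factorial_succ]; push_cast; ring
    rw [hfac]
    have hG : Real.Gamma ((k : ℝ) + (μ + 1) + 1) ≠ 0 := by
      have : (0 : ℝ) < (k : ℝ) + (μ + 1) + 1 := by
        have : (0 : ℝ) ≤ (k : ℝ) := Nat.cast_nonneg k
        linarith
      exact (Real.Gamma_pos_of_pos this).ne'
    have hfk : (k.factorial : ℝ) ≠ 0 := by positivity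
    have hk1 : ((k : ℝ) + 1) ≠ 0 := by positivity
    field_simp
    push_cast; ring
  have hfinal : HasDerivAt (fun y => Real.Gamma (μ + 1) * ∑' k, g k y)
      (Real.Gamma (μ + 1) * ∑' k, g' k v) v := hd.const_mul _
  have heq : (fun y => Real.Gamma (μ + 1) * ∑' k, g k y) = nbessel μ := by
    funext y
    rw [nbessel_eq]
  rw [heq] at hfinal
  convert hfinal using 1
  rw [hshift, nbessel_eq]
  have harg2 : μ + 1 + 1 = (μ + 1) + 1 := by ring
  rw [Real.Gamma_add_one (by linarith : μ + 1 ≠ 0)]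
  have hμ1 : μ + 1 ≠ 0 := by linarith
  field_simp

set_option maxHeartbeats 2000000 in
/-- decomposition of v^{2r+1}/(2^{2r+1}(λ+1)_{2r+1}) j_{λ+2r+1}(v) in terms
of derivatives of normalized Bessel functions. -/
theorem stmt5 (r : ℕ) (l : ℝ) (hl : -1 < l) (v : ℝ) :
    v ^ (2 * r + 1) / (2 ^ (2 * r + 1) * poch (l + 1) (2 * r + 1)) *
        nbessel (l + (2 * r + 1)) v =
      (-1 : ℝ) ^ (r + 1) * ∑ s ∈ Finset.range (r + 1), (-1 : ℝ) ^ s * (r.choose s : ℝ) *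
        (poch (l + r + 1) s / poch (l + 1) s) * deriv (nbessel (l + s)) v := by
  have hl1 : (0 : ℝ) < l + 1 := by linarith
  set A : ℕ → ℝ := fun k => (-1 : ℝ) ^ k * Real.Gamma (l + 1) /
      (k.factorial * Real.Gamma ((k : ℝ) + l + 2 * r + 2)) * (v / 2) ^ (2 * k + 2 * r + 1)
    with hA_def
  set F : ℕ → ℕ → ℝ := fun s m => (-1 : ℝ) ^ (r + s) * (v / 2) * Real.Gamma (l + 1) *
      (r.choose s : ℝ) * poch (l + r + 1) s * (bc (l + s + 1) m * (v / 2) ^ (2 * m))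
    with hF_def
  set A' : ℕ → ℝ := fun m => (-1 : ℝ) ^ (r + m) * Real.Gamma (l + 1) *
      poch ((m : ℝ) + 1 - r) r / (m.factorial * Real.Gamma ((m : ℝ) + l + 2 + r)) *
      (v / 2) ^ (2 * m + 1)
    with hA'_def
  -- LHS = ∑' A
  have hLHS : v ^ (2 * r + 1) / (2 ^ (2 * r + 1) * poch (l + 1) (2 * r + 1)) *
      nbessel (l + (2 * r + 1)) v = ∑' k, A k := by
    rw [nbessel_eq]
    have hGam : Real.Gamma (l + (2 * (r : ℝ) + 1) + 1)
        = Real.Gamma (l + 1) * poch (l + 1) (2 * r + 1) := by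
      have h1 : l + (2 * (r : ℝ) + 1) + 1 = (l + 1) + ((2 * r + 1 : ℕ) : ℝ) := by
        push_cast; ring
      rw [h1, Gamma_poch hl1]
    push_cast
    rw [hGam]
    have hP : poch (l + 1) (2 * r + 1) ≠ 0 := (poch_pos hl1 _).ne'
    rw [← tsum_mul_left, ← tsum_mul_left]
    apply tsum_congr
    intro k
    simp only [hA_def]
    have harg : (k : ℝ) + (l + (2 * (r : ℝ) + 1)) + 1 = (k : ℝ) + l + 2 * r + 2 := by
      push_cast; ring
    rw [bc, harg]
    have hGpos : (0 : ℝ) < Real.Gamma ((k : ℝ) + l + 2 * r + 2) := by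
      apply Real.Gamma_pos_of_pos
      have : (0 : ℝ) ≤ (k : ℝ) := Nat.cast_nonneg k
      have : (0 : ℝ) ≤ (r : ℝ) := Nat.cast_nonneg r
      have : (0 : ℝ) ≤ (k : ℝ) := Nat.cast_nonneg k
      nlinarith [Nat.cast_nonneg (α := ℝ) k, Nat.cast_nonneg (α := ℝ) r]
    have hfk : (k.factorial : ℝ) ≠ 0 := by positivity
    have hpow : (v / 2) ^ (2 * k + 2 * r + 1) = v ^ (2 * r + 1) / 2 ^ (2 * r + 1) * (v / 2) ^ (2 * k) := by
      rw [← div_pow, ← pow_add]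
      congr 1
      omega
    rw [hpow]
    field_simp
  -- RHS = ∑' m, ∑ s, F s m
  have hsummF : ∀ s ∈ Finset.range (r + 1), Summable (fun m => F s m) := by
    intro s _
    apply Summable.mul_left
    exact summable_series (by have := Nat.cast_nonneg (α := ℝ) s; linarith) (v / 2)
  have hRHS : (-1 : ℝ) ^ (r + 1) * ∑ s ∈ Finset.range (r + 1), (-1 : ℝ) ^ s * (r.choose s : ℝ) *
      (poch (l + r + 1) s / poch (l + 1) s) * deriv (nbessel (l + s)) v
      = ∑' m, ∑ s ∈ Finset.range (r + 1), F s m := by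
    rw [Finset.mul_sum]
    rw [Summable.tsum_finsetSum hsummF]
    apply Finset.sum_congr rfl
    intro s _
    have hls : -1 < l + (s : ℝ) := by have := Nat.cast_nonneg (α := ℝ) s; linarith
    rw [(hasDerivAt_nbessel (l + s) hls v).deriv]
    rw [nbessel_eq]
    have hGs : Real.Gamma (l + (s : ℝ) + 1 + 1)
        = Real.Gamma (l + 1) * (poch (l + 1) s * (l + 1 + s)) := by
      have h1 : l + (s : ℝ) + 1 + 1 = (l + 1) + ((s + 1 : ℕ) : ℝ) := by push_cast; ring
      rw [h1, Gamma_poch hl1, poch_succ]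
    rw [hGs]
    rw [← tsum_mul_left, ← tsum_mul_left, ← tsum_mul_left, ← tsum_mul_left]
    apply tsum_congr
    intro m
    simp only [hF_def]
    have hps : poch (l + 1) s ≠ 0 := (poch_pos hl1 s).ne'
    have hls1 : l + (s : ℝ) + 1 ≠ 0 :=
      ne_of_gt (by linarith [Nat.cast_nonneg (α := ℝ) s] : (0 : ℝ) < l + (s : ℝ) + 1)
    simp only [pow_add, pow_one]
    field_simp
    ring
  -- pointwise evaluation of inner sum via CV
  have hBA' : ∀ m, ∑ s ∈ Finset.range (r + 1), F s m = A' m := by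
    intro m
    have hmC : (0 : ℝ) < (m : ℝ) + l + 2 := by
      have := Nat.cast_nonneg (α := ℝ) m; linarith
    have hK : ∀ s ∈ Finset.range (r + 1), F s m
        = ((-1 : ℝ) ^ (r + m) * (v / 2) ^ (2 * m + 1) * Real.Gamma (l + 1) /
            (m.factorial * Real.Gamma ((m : ℝ) + l + 2))) *
          ((-1 : ℝ) ^ s * (r.choose s : ℝ) * (poch (l + r + 1) s / poch ((m : ℝ) + l + 2) s)) := by
      intro s _
      simp only [hF_def]
      rw [bc]
      have harg : (m : ℝ) + (l + s + 1) + 1 = ((m : ℝ) + l + 2) + (s : ℝ) := by push_cast; ring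
      rw [harg, Gamma_poch hmC s]
      have h1 : Real.Gamma ((m : ℝ) + l + 2) ≠ 0 := (Real.Gamma_pos_of_pos hmC).ne'
      have h2 : poch ((m : ℝ) + l + 2) s ≠ 0 := (poch_pos hmC s).ne'
      have hfm : (m.factorial : ℝ) ≠ 0 := by positivity
      simp only [pow_add, pow_one]
      field_simp
    rw [Finset.sum_congr rfl hK, ← Finset.mul_sum]
    rw [CV r (l + r + 1) ((m : ℝ) + l + 2) hmC]
    have harg2 : (m : ℝ) + l + 2 - (l + r + 1) = (m : ℝ) + 1 - r := by ring
    rw [harg2]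
    simp only [hA'_def]
    have hG2 : Real.Gamma ((m : ℝ) + l + 2) * poch ((m : ℝ) + l + 2) r
        = Real.Gamma ((m : ℝ) + l + 2 + r) := (Gamma_poch hmC r).symm
    have h1 : Real.Gamma ((m : ℝ) + l + 2) ≠ 0 := (Real.Gamma_pos_of_pos hmC).ne'
    have h2 : poch ((m : ℝ) + l + 2) r ≠ 0 := (poch_pos hmC r).ne'
    have hfm : (m.factorial : ℝ) ≠ 0 := by positivity
    rw [← hG2]
    field_simp
  have hsumB : Summable (fun m => ∑ s ∈ Finset.range (r + 1), F s m) :=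
    summable_sum hsummF
  have hsumA' : Summable A' := hsumB.congr hBA'
  -- shift
  have hzero : ∀ i ∈ Finset.range r, A' i = 0 := by
    intro i hi
    simp only [hA'_def]
    rw [poch_eq_zero (Finset.mem_range.1 hi)]
    ring
  have hshift : ∑' m, A' m = ∑' k, A' (k + r) := by
    rw [← Summable.sum_add_tsum_nat_add r hsumA', Finset.sum_eq_zero hzero, zero_add]
  -- A' (k + r) = A k
  have hAA : ∀ k, A' (k + r) = A k := by
    intro k
    simp only [hA'_def, hA_def]
    have h1 : ((k + r : ℕ) : ℝ) + 1 - r = (k : ℝ) + 1 := by push_cast; ring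
    have h2 : ((k + r : ℕ) : ℝ) + l + 2 + r = (k : ℝ) + l + 2 * r + 2 := by push_cast; ring
    rw [h1, h2]
    have h3 : (-1 : ℝ) ^ (r + (k + r)) = (-1 : ℝ) ^ k := by
      rw [show r + (k + r) = k + 2 * r by omega, pow_add, pow_mul]
      norm_num
    rw [h3]
    have h4 : 2 * (k + r) + 1 = 2 * k + 2 * r + 1 := by omega
    rw [h4]
    have hGpos : (0 : ℝ) < Real.Gamma ((k : ℝ) + l + 2 * r + 2) := by
      apply Real.Gamma_pos_of_pos
      nlinarith [Nat.cast_nonneg (α := ℝ) k, Nat.cast_nonneg (α := ℝ) r]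
    have hfk : (k.factorial : ℝ) ≠ 0 := by positivity
    have hfkr : ((k + r).factorial : ℝ) ≠ 0 := by positivity
    have hpn := poch_nat_cast k r
    have hpkr : poch ((k : ℝ) + 1) r ≠ 0 := by
      have : (0 : ℝ) < (k : ℝ) + 1 := by positivity
      exact (poch_pos this r).ne'
    rw [← hpn]
    field_simp
  rw [hLHS, hRHS]
  rw [tsum_congr hBA', hshift, tsum_congr hAA]
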